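/- Suppose p₁ > α and p₂ > 1. Let x* be a maximum flow with minimum transportation cost whose used paths all have transportation cost α (Assumption 1), and let μ^min disrupt all edges of a minimum s–t cut. Then the mixed strategy profile (σ¹,σ²) with σ¹(x⁰)=1−1/p₂, σ¹(x*)=1/p₂, σ²(μ⁰)=α/p₁, σ²(μ^min)=1−α/p₁ is a Nash equilibrium, and U₁(σ¹,σ²)=U₂(σ¹,σ²)=0. -/
import Mathlib


open scoped BigOperators Classical

/-- A capacitated network given by its finite edge set, capacities, per-unit
transportation costs, and the (edge sets of its) `s`-`t` paths and loops. -/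
structure Network where
  E : Type
  fin : Fintype E
  dec : DecidableEq E
  /-- edge capacities -/
  c : E → ℝ
  /-- per-unit transportation costs -/
  b : E → ℝ
  /-- the `s`-`t` paths, identified with their edge sets -/
  P : Finset (Finset E)
  /-- the loops, identified with their edge sets -/
  L : Finset (Finset E)
  c_nonneg : ∀ e, 0 ≤ c e
  b_nonneg : ∀ e, 0 ≤ b e
  P_nonempty : P.Nonempty
  P_edges_nonempty : ∀ p ∈ P, p.Nonempty

attribute [instance] Network.fin Network.dec

namespace Network

variable (N : Network)

/-- All paths and loops. -/
noncomputable def Lam : Finset (Finset N.E) := N.P ∪ N.L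

/-- The flow through edge `e` induced by the path/loop flow `y`. -/
noncomputable def edgeFlow (y : Finset N.E → ℝ) (e : N.E) : ℝ :=
  ∑ l ∈ N.Lam.filter (fun l => e ∈ l), y l

/-- Feasibility of a path/loop flow: nonnegative, supported on paths and loops,
and respecting edge capacities. -/
def Feasible (y : Finset N.E → ℝ) : Prop :=
  (∀ l, 0 ≤ y l) ∧ (∀ l, l ∉ N.Lam → y l = 0) ∧ (∀ e, N.edgeFlow y e ≤ N.c e)

/-- The value `F(x)` of the initial flow: total flow on `s`-`t` paths. -/
noncomputable def val (y : Finset N.E → ℝ) : ℝ := ∑ p ∈ N.P, y p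

/-- The value `F(x^μ)` of the effective flow after the attack `μ`:
only the flow on paths avoiding all disrupted edges survives. -/
noncomputable def effVal (y : Finset N.E → ℝ) (μ : Finset N.E) : ℝ :=
  ∑ p ∈ N.P.filter (fun p => Disjoint p μ), y p

/-- Transportation cost `C₁(x) = Σ b_e x_e`. -/
noncomputable def C1 (y : Finset N.E → ℝ) : ℝ := ∑ e, N.b e * N.edgeFlow y e

/-- Cost of an attack, `C₂(μ) = Σ_{e ∈ μ} c_e`. -/
noncomputable def C2 (μ : Finset N.E) : ℝ := ∑ e ∈ μ, N.c e

/-- Transportation cost of a path. -/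
noncomputable def pathCost (p : Finset N.E) : ℝ := ∑ e ∈ p, N.b e

/-- `α`: the minimum transportation cost over all `s`-`t` paths. -/
noncomputable def alpha : ℝ := sInf (N.pathCost '' ↑N.P)

/-- A cut: a set of edges meeting every `s`-`t` path. -/
def IsCut (K : Finset N.E) : Prop := ∀ p ∈ N.P, ¬ Disjoint p K

/-- A minimum cut: a cut of minimum capacity. -/
def IsMinCut (K : Finset N.E) : Prop := N.IsCut K ∧ ∀ K', N.IsCut K' → N.C2 K ≤ N.C2 K'

/-- `Θ`: the maximum flow value. -/
noncomputable def Theta : ℝ := sSup (N.val '' {y | N.Feasible y})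

/-- A maximum flow. -/
def IsMaxFlow (y : Finset N.E → ℝ) : Prop :=
  N.Feasible y ∧ ∀ z, N.Feasible z → N.val z ≤ N.val y

/-- A maximum flow with minimum transportation cost (an element of `Ω`). -/
def IsMFMC (y : Finset N.E → ℝ) : Prop :=
  N.IsMaxFlow y ∧ ∀ z, N.IsMaxFlow z → N.C1 y ≤ N.C1 z

/-- Assumption 1: `x` is a max-flow with minimum transportation cost all of whose
positively used `s`-`t` paths have transportation cost exactly `α`. -/
def Assumption1 (x : Finset N.E → ℝ) : Prop :=
  N.IsMFMC x ∧ ∀ p ∈ N.P, 0 < x p → N.pathCost p = N.alpha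

/-- Defender's payoff `u₁(x,μ) = p₁ F(x^μ) - C₁(x)`. -/
noncomputable def u1 (p1 : ℝ) (y : Finset N.E → ℝ) (μ : Finset N.E) : ℝ :=
  p1 * N.effVal y μ - N.C1 y

/-- Attacker's payoff `u₂(x,μ) = p₂ F(x - x^μ) - C₂(μ)`. -/
noncomputable def u2 (p2 : ℝ) (y : Finset N.E → ℝ) (μ : Finset N.E) : ℝ :=
  p2 * (N.val y - N.effVal y μ) - N.C2 μ

/-- The defender's action set: feasible flows. -/
def Flow : Type := {y : Finset N.E → ℝ // N.Feasible y}

/-- A (finitely supported) mixed strategy of the defender. -/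
def MixedF (σ : N.Flow →₀ ℝ) : Prop := (∀ y, 0 ≤ σ y) ∧ (σ.sum fun _ w => w) = 1

/-- A mixed strategy of the attacker. -/
def MixedA (σ : Finset N.E → ℝ) : Prop := (∀ μ, 0 ≤ σ μ) ∧ ∑ μ, σ μ = 1

/-- Expectation of a function of the flow under the defender's mixed strategy. -/
noncomputable def expF (σ : N.Flow →₀ ℝ) (g : (Finset N.E → ℝ) → ℝ) : ℝ :=
  σ.sum fun y w => w * g y.1

/-- Expectation of a function of the attack under the attacker's mixed strategy. -/
noncomputable def expA (σ : Finset N.E → ℝ) (h : Finset N.E → ℝ) : ℝ :=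
  ∑ μ, σ μ * h μ

/-- Expectation of a function of both actions under a mixed strategy profile. -/
noncomputable def expFA (σ1 : N.Flow →₀ ℝ) (σ2 : Finset N.E → ℝ)
    (g : (Finset N.E → ℝ) → Finset N.E → ℝ) : ℝ :=
  σ1.sum fun y w => w * ∑ μ, σ2 μ * g y.1 μ

/-- Defender's expected payoff. -/
noncomputable def U1 (p1 : ℝ) (σ1 : N.Flow →₀ ℝ) (σ2 : Finset N.E → ℝ) : ℝ :=
  N.expFA σ1 σ2 (N.u1 p1)

/-- Attacker's expected payoff. -/
noncomputable def U2 (p2 : ℝ) (σ1 : N.Flow →₀ ℝ) (σ2 : Finset N.E → ℝ) : ℝ :=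
  N.expFA σ1 σ2 (N.u2 p2)

/-- Mixed Nash equilibrium. -/
def IsNE (p1 p2 : ℝ) (σ1 : N.Flow →₀ ℝ) (σ2 : Finset N.E → ℝ) : Prop :=
  N.MixedF σ1 ∧ N.MixedA σ2 ∧
  (∀ τ1, N.MixedF τ1 → N.U1 p1 τ1 σ2 ≤ N.U1 p1 σ1 σ2) ∧
  (∀ τ2, N.MixedA τ2 → N.U2 p2 σ1 τ2 ≤ N.U2 p2 σ1 σ2)

/-- Pure Nash equilibrium. -/
def IsPureNE (p1 p2 : ℝ) (x : Finset N.E → ℝ) (μ : Finset N.E) : Prop :=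
  N.Feasible x ∧
  (∀ y, N.Feasible y → N.u1 p1 y μ ≤ N.u1 p1 x μ) ∧
  (∀ ν, N.u2 p2 x ν ≤ N.u2 p2 x μ)

end Network

namespace Network

variable (N : Network)

lemma pathCost_nonneg (l : Finset N.E) : 0 ≤ N.pathCost l :=
  Finset.sum_nonneg fun e _ => N.b_nonneg e

lemma alpha_nonneg : 0 ≤ N.alpha := by
  apply le_csInf ((N.P_nonempty.to_set).image _)
  rintro x ⟨p, _, rfl⟩
  exact N.pathCost_nonneg p

lemma alpha_le_pathCost {p : Finset N.E} (hp : p ∈ N.P) : N.alpha ≤ N.pathCost p :=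
  csInf_le ((N.P.finite_toSet.image _).bddBelow) ⟨p, hp, rfl⟩

lemma P_subset_Lam : N.P ⊆ N.Lam := by
  unfold Lam; exact Finset.subset_union_left

lemma C1_eq (y : Finset N.E → ℝ) :
    N.C1 y = ∑ l ∈ N.Lam, y l * N.pathCost l := by
  unfold C1 edgeFlow pathCost
  simp_rw [Finset.mul_sum, Finset.sum_filter]
  rw [Finset.sum_comm]
  refine Finset.sum_congr rfl fun l _ => ?_
  rw [← Finset.sum_filter, Finset.filter_univ_mem]
  exact Finset.sum_congr rfl fun e _ => mul_comm _ _

lemma C1_lower {y : Finset N.E → ℝ} (hy : N.Feasible y) :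
    N.alpha * N.val y ≤ N.C1 y := by
  rw [C1_eq, val, Finset.mul_sum]
  calc ∑ p ∈ N.P, N.alpha * y p ≤ ∑ p ∈ N.P, y p * N.pathCost p := by
        refine Finset.sum_le_sum fun p hp => ?_
        rw [mul_comm]
        exact mul_le_mul_of_nonneg_left (N.alpha_le_pathCost hp) (hy.1 p)
    _ ≤ ∑ l ∈ N.Lam, y l * N.pathCost l :=
        Finset.sum_le_sum_of_subset_of_nonneg (N.P_subset_Lam)
          (fun l _ _ => mul_nonneg (hy.1 l) (N.pathCost_nonneg l))

lemma C1_assumption1 {x : Finset N.E → ℝ} (hx : N.Assumption1 x) :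
    N.C1 x = N.alpha * N.val x := by
  have hxf : N.Feasible x := hx.1.1.1
  refine le_antisymm ?_ (N.C1_lower hxf)
  set z : Finset N.E → ℝ := fun l => if l ∈ N.P then x l else 0 with hz
  have hzle : ∀ l, z l ≤ x l := by
    intro l; by_cases h : l ∈ N.P <;> simp [hz, h, hxf.1 l]
  have hznn : ∀ l, 0 ≤ z l := by
    intro l; by_cases h : l ∈ N.P <;> simp [hz, h, hxf.1 l]
  have hzfeas : N.Feasible z := by
    refine ⟨hznn, fun l hl => ?_, fun e => ?_⟩
    · have : l ∉ N.P := fun h => hl (N.P_subset_Lam h)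
      simp [hz, this]
    · exact le_trans (Finset.sum_le_sum fun l _ => hzle l) (hxf.2.2 e)
  have hzval : N.val z = N.val x := by
    unfold val; exact Finset.sum_congr rfl fun p hp => by simp [hz, hp]
  have hzmax : N.IsMaxFlow z := ⟨hzfeas, fun w hw => (hx.1.1.2 w hw).trans hzval.ge⟩
  have hmin := hx.1.2 z hzmax
  have hC1z : N.C1 z = ∑ p ∈ N.P, x p * N.pathCost p := by
    rw [C1_eq, ← Finset.sum_subset N.P_subset_Lam]
    · exact Finset.sum_congr rfl fun p hp => by simp [hz, hp]
    · intro l _ hlp; simp [hz, hlp]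
  have hsum : ∑ p ∈ N.P, x p * N.pathCost p = N.alpha * N.val x := by
    rw [val, Finset.mul_sum]
    refine Finset.sum_congr rfl fun p hp => ?_
    rcases (hxf.1 p).lt_or_eq with h | h
    · rw [hx.2 p hp h, mul_comm]
    · rw [← h, zero_mul, mul_zero]
  calc N.C1 x ≤ N.C1 z := hmin
    _ = N.alpha * N.val x := by rw [hC1z, hsum]

lemma maxflow_val_eq_Theta {x : Finset N.E → ℝ} (hx : N.IsMaxFlow x) :
    N.val x = N.Theta := by
  refine le_antisymm (le_csSup ⟨N.val x, ?_⟩ ⟨x, hx.1, rfl⟩)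
    (csSup_le ⟨N.val x, ⟨x, hx.1, rfl⟩⟩ ?_) <;>
  · rintro v ⟨y, hy, rfl⟩
    exact hx.2 y hy

lemma effVal_empty (y : Finset N.E → ℝ) : N.effVal y ∅ = N.val y := by
  unfold effVal val
  rw [Finset.filter_true_of_mem]
  intro p _; exact Finset.disjoint_empty_right p

lemma effVal_cut (y : Finset N.E → ℝ) {K : Finset N.E} (hK : N.IsCut K) :
    N.effVal y K = 0 := by
  unfold effVal
  rw [Finset.filter_false_of_mem, Finset.sum_empty]
  intro p hp; exact hK p hp

lemma val_zero : N.val (fun _ => 0) = 0 := by simp [val]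

lemma C1_zero : N.C1 (fun _ => 0) = 0 := by simp [C1, edgeFlow]

lemma effVal_zero (μ : Finset N.E) : N.effVal (fun _ => 0) μ = 0 := by simp [effVal]

lemma val_sub_effVal_le_C2 {y : Finset N.E → ℝ} (hy : N.Feasible y) (μ : Finset N.E) :
    N.val y - N.effVal y μ ≤ N.C2 μ := by
  have hsplit : N.effVal y μ + ∑ p ∈ N.P.filter (fun p => ¬ Disjoint p μ), y p = N.val y :=
    Finset.sum_filter_add_sum_filter_not N.P _ _
  have hgoal : N.val y - N.effVal y μ
      = ∑ p ∈ N.P.filter (fun p => ¬ Disjoint p μ), y p := by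
    rw [← hsplit]; ring
  rw [hgoal]
  have step1 : ∑ p ∈ N.P.filter (fun p => ¬ Disjoint p μ), y p
      ≤ ∑ p ∈ N.P, ((μ.filter (fun e => e ∈ p)).card : ℝ) * y p := by
    refine le_trans (Finset.sum_le_sum fun p hp => ?_)
      (Finset.sum_le_sum_of_subset_of_nonneg (Finset.filter_subset _ _)
        (fun p _ _ => mul_nonneg (Nat.cast_nonneg _) (hy.1 p)))
    obtain ⟨hp1, hp2⟩ := Finset.mem_filter.mp hp
    obtain ⟨e, hep, heμ⟩ := Finset.not_disjoint_iff.mp hp2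
    have hcard : 1 ≤ ((μ.filter (fun e => e ∈ p)).card : ℝ) := by
      have : (μ.filter (fun e => e ∈ p)).Nonempty := ⟨e, Finset.mem_filter.mpr ⟨heμ, hep⟩⟩
      exact_mod_cast Finset.card_pos.mpr this
    nlinarith [hy.1 p]
  have step2 : ∑ p ∈ N.P, ((μ.filter (fun e => e ∈ p)).card : ℝ) * y p
      = ∑ e ∈ μ, ∑ p ∈ N.P.filter (fun p => e ∈ p), y p := by
    simp_rw [Finset.sum_filter]
    rw [Finset.sum_comm]
    refine Finset.sum_congr rfl fun p _ => ?_
    rw [← Finset.sum_filter, Finset.sum_const, nsmul_eq_mul]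
  have step3 : ∑ e ∈ μ, ∑ p ∈ N.P.filter (fun p => e ∈ p), y p ≤ N.C2 μ := by
    refine Finset.sum_le_sum fun e _ => le_trans ?_ (hy.2.2 e)
    exact Finset.sum_le_sum_of_subset_of_nonneg
      (Finset.filter_subset_filter _ N.P_subset_Lam) (fun l _ _ => hy.1 l)
  calc _ ≤ _ := step1
    _ = _ := step2
    _ ≤ _ := step3

end Network


/-- if `p₁ > α` and `p₂ > 1`, with `x*` a max-flow with minimum transportation
cost satisfying Assumption 1 and `μ^min` the attack disrupting all edges of a minimum cut
(whose cost is `Θ` by max-flow min-cut), the mixed profile with `σ¹(x⁰) = 1 − 1/p₂`,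
`σ¹(x*) = 1/p₂`, `σ²(μ⁰) = α/p₁`, `σ²(μ^min) = 1 − α/p₁` is a Nash equilibrium and
`U₁(σ¹,σ²) = U₂(σ¹,σ²) = 0`. -/
theorem mixed_nash_equilibrium_region_III (N : Network) (p1 p2 : ℝ)
    (hp1 : N.alpha < p1) (hp2 : 1 < p2)
    (xs : N.Flow) (hxs : N.Assumption1 xs.1)
    (x0 : N.Flow) (hx0 : x0.1 = fun _ => 0)
    (K : Finset N.E) (hK : N.IsMinCut K) (hKTheta : N.C2 K = N.Theta)
    (σ1 : N.Flow →₀ ℝ)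
    (hσ1 : σ1 = Finsupp.single x0 (1 - 1 / p2) + Finsupp.single xs (1 / p2))
    (σ2 : Finset N.E → ℝ)
    (hσ2 : σ2 = fun μ =>
      if μ = ∅ then N.alpha / p1 else if μ = K then 1 - N.alpha / p1 else 0) :
    N.IsNE p1 p2 σ1 σ2 ∧ N.U1 p1 σ1 σ2 = 0 ∧ N.U2 p2 σ1 σ2 = 0 := by
  subst hσ1 hσ2
  have hα0 : 0 ≤ N.alpha := N.alpha_nonneg
  have hp1pos : 0 < p1 := lt_of_le_of_lt hα0 hp1
  have hp2pos : 0 < p2 := lt_trans one_pos hp2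
  have ha0 : 0 ≤ N.alpha / p1 := div_nonneg hα0 hp1pos.le
  have ha1 : N.alpha / p1 ≤ 1 := (div_le_one hp1pos).mpr hp1.le
  have hb0 : 0 ≤ 1 / p2 := by positivity
  have hb1 : 1 / p2 ≤ 1 := (div_le_one hp2pos).mpr hp2.le
  have hKne : K ≠ ∅ := by
    obtain ⟨p, hp⟩ := N.P_nonempty
    intro h
    exact hK.1 p hp (h ▸ Finset.disjoint_empty_right p)
  -- expectation over the attacker's mixed strategy
  have hA : ∀ h : Finset N.E → ℝ,
      (∑ μ, (if μ = ∅ then N.alpha / p1 else if μ = K then 1 - N.alpha / p1 else 0) * h μ)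
        = (N.alpha / p1) * h ∅ + (1 - N.alpha / p1) * h K := by
    intro h
    have hterm : ∀ μ : Finset N.E,
        (if μ = ∅ then N.alpha / p1 else if μ = K then 1 - N.alpha / p1 else 0) * h μ
        = (if μ = ∅ then (N.alpha / p1) * h ∅ else 0)
          + (if μ = K then (1 - N.alpha / p1) * h K else 0) := by
      intro μ
      by_cases h1 : μ = ∅
      · subst h1; simp [Ne.symm hKne]
      · by_cases h2 : μ = K
        · subst h2; simp [hKne]
        · simp [h1, h2]
    rw [Finset.sum_congr rfl fun μ _ => hterm μ, Finset.sum_add_distrib]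
    simp
  -- expectation over the defender's mixed strategy
  have hF : ∀ G : N.Flow → ℝ,
      (Finsupp.single x0 (1 - 1 / p2) + Finsupp.single xs (1 / p2)).sum
        (fun y w => w * G y) = (1 - 1 / p2) * G x0 + (1 / p2) * G xs := by
    intro G
    rw [Finsupp.sum_add_index' (fun y => zero_mul (G y)) (fun y w1 w2 => add_mul w1 w2 (G y)),
      Finsupp.sum_single_index (zero_mul (G x0)), Finsupp.sum_single_index (zero_mul (G xs))]
  have hx0val : N.val x0.1 = 0 := by rw [hx0]; exact N.val_zero
  have hx0C1 : N.C1 x0.1 = 0 := by rw [hx0]; exact N.C1_zero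
  have hx0eff : ∀ μ, N.effVal x0.1 μ = 0 := by intro μ; rw [hx0]; exact N.effVal_zero μ
  -- defender's expected payoff against σ2
  have key1 : ∀ y : N.Flow,
      (∑ μ, (if μ = ∅ then N.alpha / p1 else if μ = K then 1 - N.alpha / p1 else 0)
        * N.u1 p1 y.1 μ) = N.alpha * N.val y.1 - N.C1 y.1 := by
    intro y
    rw [hA]
    unfold Network.u1
    rw [N.effVal_empty, N.effVal_cut y.1 hK.1]
    field_simp
    ring
  have hU1 : ∀ τ1 : N.Flow →₀ ℝ, N.U1 p1 τ1
      (fun μ => if μ = ∅ then N.alpha / p1 else if μ = K then 1 - N.alpha / p1 else 0)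
      = τ1.sum fun y w => w * (N.alpha * N.val y.1 - N.C1 y.1) := by
    intro τ1
    unfold Network.U1 Network.expFA
    exact Finsupp.sum_congr fun y _ => by rw [key1 y]
  have hU1σ : N.U1 p1 (Finsupp.single x0 (1 - 1 / p2) + Finsupp.single xs (1 / p2))
      (fun μ => if μ = ∅ then N.alpha / p1 else if μ = K then 1 - N.alpha / p1 else 0) = 0 := by
    rw [hU1, hF, hx0val, hx0C1, N.C1_assumption1 hxs]
    ring
  -- attacker's expected payoff against σ1
  have key2 : ∀ τ2 : Finset N.E → ℝ,
      N.U2 p2 (Finsupp.single x0 (1 - 1 / p2) + Finsupp.single xs (1 / p2)) τ2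
      = ∑ μ, τ2 μ * (N.val xs.1 - N.effVal xs.1 μ - N.C2 μ) := by
    intro τ2
    unfold Network.U2 Network.expFA
    rw [hF]
    rw [Finset.mul_sum, Finset.mul_sum, ← Finset.sum_add_distrib]
    refine Finset.sum_congr rfl fun μ _ => ?_
    have h0 : N.u2 p2 x0.1 μ = - N.C2 μ := by
      unfold Network.u2
      rw [hx0val, hx0eff]
      ring
    rw [h0]
    unfold Network.u2
    field_simp
    ring
  have hvalxs : N.val xs.1 = N.Theta := N.maxflow_val_eq_Theta hxs.1.1
  have hU2σ : N.U2 p2 (Finsupp.single x0 (1 - 1 / p2) + Finsupp.single xs (1 / p2))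
      (fun μ => if μ = ∅ then N.alpha / p1 else if μ = K then 1 - N.alpha / p1 else 0) = 0 := by
    rw [key2, hA]
    rw [N.effVal_empty, N.effVal_cut xs.1 hK.1, hKTheta, hvalxs]
    simp [Network.C2]
  refine ⟨⟨?_, ?_, ?_, ?_⟩, hU1σ, hU2σ⟩
  · -- MixedF σ1
    constructor
    · intro y
      rw [Finsupp.add_apply, Finsupp.single_apply, Finsupp.single_apply]
      split <;> split <;> linarith
    · rw [Finsupp.sum_add_index' (fun _ => rfl) (fun _ _ _ => rfl),
        Finsupp.sum_single_index rfl, Finsupp.sum_single_index rfl]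
      ring
  · -- MixedA σ2
    constructor
    · intro μ
      dsimp only
      split_ifs <;> linarith
    · have := hA (fun _ => 1)
      simp only [mul_one] at this
      rw [this]
      ring
  · -- defender best response
    intro τ1 hτ1
    rw [hU1, hU1σ]
    apply Finset.sum_nonpos
    intro y _
    exact mul_nonpos_of_nonneg_of_nonpos (hτ1.1 y)
      (sub_nonpos.mpr (N.C1_lower y.2))
  · -- attacker best response
    intro τ2 hτ2
    rw [key2, hU2σ]
    apply Finset.sum_nonpos
    intro μ _
    exact mul_nonpos_of_nonneg_of_nonpos (hτ2.1 μ)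
      (sub_nonpos.mpr (N.val_sub_effVal_le_C2 xs.2 μ))
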